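/- Let K be a propositional base. If λ is a minimal LP_m model of ⋀K, then ∼_λ is a Maximal Consistency Relation of K, where ∼_λ is the equivalence relation on Occ(K) whose equivalence classes are {Occ(p,K) : p∈var(K), |λ(p)|=1} ∪ {PosOcc(p,K), NegOcc(p,K) : p∈var(K), λ(p)={0,1}}. -/

import Mathlib

/-!
Consistency: give every renamed occurrence `R o` the value `μ_λ(o)`. An occurrence of a glutted
variable then gets the value its polarity asks for, so each renamed formula is true because `λ`
makes the original one true, and `∼_λ`-related occurrences get equal values.

Maximality: a model `w` of a strictly larger consistent relation yields the LP_m interpretation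
`λ'(x) = {w(R o) : o ∈ Occ(x, K)}`, again a model of `K`. Every glut of `λ'` is a glut of `λ`,
while the extra pair joins `PosOcc(p, K)` and `NegOcc(p, K)` for some glut `p` of `λ`, which is
therefore not a glut of `λ'`; this contradicts the minimality of `λ`.
-/


namespace Occ

/-- Propositional formulas over variables indexed by `ℕ`,
built from variables using negation and conjunction. -/
inductive Form : Type where
  | var : ℕ → Form
  | neg : Form → Form
  | conj : Form → Form → Form
deriving DecidableEq

/-- Boolean evaluation of a formula under an interpretation `w`. -/
def eval (w : ℕ → Bool) : Form → Bool
  | .var p => w p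
  | .neg φ => !(eval w φ)
  | .conj φ ψ => eval w φ && eval w ψ

/-- The variables occurring in a formula. -/
def vars : Form → Finset ℕ
  | .var p => {p}
  | .neg φ => vars φ
  | .conj φ ψ => vars φ ∪ vars ψ

/-- A step in a path addressing a subformula occurrence. -/
inductive Step : Type where
  | neg | left | right
deriving DecidableEq

/-- `occAt φ l pol = some (p, pol')` iff the path `l` addresses an occurrence of the
variable `p` in `φ`, and this occurrence has polarity `pol'` (`true` = positive)
when the ambient polarity of `φ` is `pol`. -/
def occAt : Form → List Step → Bool → Option (ℕ × Bool)
  | .var p, [], pol => some (p, pol)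
  | .neg φ, .neg :: l, pol => occAt φ l (!pol)
  | .conj φ _, .left :: l, pol => occAt φ l pol
  | .conj _ ψ, .right :: l, pol => occAt ψ l pol
  | _, _, _ => none

/-- A variable occurrence in a base: a formula together with a path into it. -/
abbrev Occurrence : Type := Form × List Step

/-- A propositional base: a finite set of formulas. -/
abbrev PB : Type := Finset Form

/-- `o` is a variable occurrence in the base `K`. -/
def IsOcc (K : PB) (o : Occurrence) : Prop :=
  o.1 ∈ K ∧ ∃ p pol, occAt o.1 o.2 true = some (p, pol)

/-- `o` is an occurrence of the variable `p` in `K`, of polarity `pol`. -/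
def IsOccOf (K : PB) (o : Occurrence) (p : ℕ) (pol : Bool) : Prop :=
  o.1 ∈ K ∧ occAt o.1 o.2 true = some (p, pol)

/-- `o` is an occurrence of the variable `p` in `K`. -/
def IsOccVar (K : PB) (o : Occurrence) (p : ℕ) : Prop :=
  ∃ pol, IsOccOf K o p pol

/-- `o` is a positive variable occurrence in `K`. -/
def IsPosOcc (K : PB) (o : Occurrence) : Prop := ∃ p, IsOccOf K o p true

/-- `o` is a negative variable occurrence in `K`. -/
def IsNegOcc (K : PB) (o : Occurrence) : Prop := ∃ p, IsOccOf K o p false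

/-- `o` and `o'` are occurrences of the same variable. -/
def sameVar (o o' : Occurrence) : Prop :=
  ∃ p pol pol', occAt o.1 o.2 true = some (p, pol) ∧ occAt o'.1 o'.2 true = some (p, pol')

/-- The variables occurring in a base. -/
def varsPB (K : PB) : Finset ℕ := K.sup vars

/-- `w` is a (Boolean) model of the base `K` (i.e. of the conjunction of its formulas). -/
def modelsPB (w : ℕ → Bool) (K : PB) : Prop := ∀ φ ∈ K, eval w φ = true

/-- A base is consistent iff the conjunction of its formulas has a model. -/
def ConsistentPB (K : PB) : Prop := ∃ w, modelsPB w K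

/-- Classical entailment from a base. -/
def Entails (K : PB) (φ : Form) : Prop := ∀ w, modelsPB w K → eval w φ = true

/-- Rename every variable occurrence of a formula, the new variable of the
occurrence at path `l` being `f l`. -/
def renameBy : (List Step → ℕ) → Form → Form
  | f, .var _ => .var (f [])
  | f, .neg φ => .neg (renameBy (fun l => f (.neg :: l)) φ)
  | f, .conj φ ψ =>
      .conj (renameBy (fun l => f (.left :: l)) φ) (renameBy (fun l => f (.right :: l)) ψ)

/-- The formula `φ` (viewed as a member of a base) with each occurrence `o`
replaced by the variable `R o`. -/
def renameForm (R : Occurrence → ℕ) (φ : Form) : Form :=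
  renameBy (fun l => R (φ, l)) φ

/-- A C-renaming of `K`: it assigns a pairwise distinct fresh variable to each
occurrence of `K`. -/
structure IsCRenaming (K : PB) (R : Occurrence → ℕ) : Prop where
  fresh : ∀ o, IsOcc K o → R o ∉ varsPB K
  inj : ∀ o o', IsOcc K o → IsOcc K o' → R o = R o' → o = o'

/-- Binary relations on occurrences, viewed as sets of ordered pairs. -/
abbrev Rel : Type := Set (Occurrence × Occurrence)

/-- `r` is an equivalence relation on `Occ(K)`. -/
structure IsEquivOn (K : PB) (r : Rel) : Prop where
  dom : ∀ q ∈ r, IsOcc K q.1 ∧ IsOcc K q.2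
  refl : ∀ o, IsOcc K o → (o, o) ∈ r
  symm : ∀ q ∈ r, (q.2, q.1) ∈ r
  trans : ∀ a b c : Occurrence, (a, b) ∈ r → (b, c) ∈ r → (a, c) ∈ r

/-- Compliance: related occurrences are occurrences of the same variable. -/
def Compliant (r : Rel) : Prop := ∀ q ∈ r, sameVar q.1 q.2

/-- Consistency of the formula `⋀R(K) ∧ ⋀_{(o,o')∈r} (R(o) ↔ R(o'))`. -/
def RelConsistent (K : PB) (R : Occurrence → ℕ) (r : Rel) : Prop :=
  ∃ w : ℕ → Bool, (∀ φ ∈ K, eval w (renameForm R φ) = true) ∧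
    ∀ q ∈ r, w (R q.1) = w (R q.2)

/-- Minimal Inconsistency Relation of `K` (w.r.t. the C-renaming `R`). -/
def IsMIR (K : PB) (R : Occurrence → ℕ) (r : Rel) : Prop :=
  IsEquivOn K r ∧ Compliant r ∧ ¬ RelConsistent K R r ∧
    ∀ r', IsEquivOn K r' → Compliant r' → ¬ RelConsistent K R r' → ¬ r' ⊂ r

/-- Maximal Consistency Relation of `K` (w.r.t. the C-renaming `R`). -/
def IsMCR (K : PB) (R : Occurrence → ℕ) (r : Rel) : Prop :=
  IsEquivOn K r ∧ Compliant r ∧ RelConsistent K R r ∧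
    ∀ r', IsEquivOn K r' → Compliant r' → RelConsistent K R r' → ¬ r ⊂ r'

/-- The relation `∼_c^K`: relating occurrences of `K` of the same variable. -/
def sameVarRel (K : PB) : Rel :=
  {q | IsOcc K q.1 ∧ IsOcc K q.2 ∧ sameVar q.1 q.2}

/-- `PN(r)`: related pairs consisting of a positive and a negative occurrence. -/
def PN (K : PB) (r : Rel) : Rel :=
  {q | q ∈ r ∧ IsPosOcc K q.1 ∧ IsNegOcc K q.2}

/-- A BMCR: an MCR satisfying Maximality-2. -/
def IsBMCR (K : PB) (R : Occurrence → ℕ) (r : Rel) : Prop :=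
  IsMCR K R r ∧
    ∀ r', IsEquivOn K r' → Compliant r' → RelConsistent K R r' → ¬ PN K r ⊂ PN K r'

/-- `H` is a hitting set of the collection `S`. -/
def IsHittingSet {α : Type} (S : Set (Set α)) (H : Set α) : Prop :=
  ∀ s ∈ S, (s ∩ H).Nonempty

/-- `H` is a minimal hitting set of the collection `S`. -/
def IsMinHittingSet {α : Type} (S : Set (Set α)) (H : Set α) : Prop :=
  IsHittingSet S H ∧ ∀ H', H' ⊂ H → ¬ IsHittingSet S H'

/-- `r` is `H`-maximal (for an equivalence relation `r ⊆ ∼_c^K`). -/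
def IsHMaximal (K : PB) (H r : Rel) : Prop :=
  r ∩ H = ∅ ∧
    ∀ r', IsEquivOn K r' → r' ⊆ sameVarRel K → r ⊂ r' → (r' ∩ H).Nonempty

/-- `r` is `H`-minimal (for an equivalence relation `r ⊆ ∼_c^K`). -/
def IsHMinimal (K : PB) (H r : Rel) : Prop :=
  H ⊆ r ∧ ∀ r', IsEquivOn K r' → r' ⊂ r → ¬ H ⊆ r'

/-- The set of all MIRs of `K`. -/
def MIRs (K : PB) (R : Occurrence → ℕ) : Set Rel := {r | IsMIR K R r}

/-- The set of all C-MCRs of `K`: relations `θ ⊆ ∼_c^K` with `∼_c^K ∖ θ` an MCR. -/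
def CMCRs (K : PB) (R : Occurrence → ℕ) : Set Rel :=
  {θ | θ ⊆ sameVarRel K ∧ IsMCR K R (sameVarRel K \ θ)}

/-- `ρ` is a `∼`-renaming for the equivalence relation `r` on `Occ(K)`:
it assigns a distinct variable to each equivalence class (so it is constant on
classes and distinguishes distinct classes), and any class containing all the
occurrences of a variable `p` is mapped to `p` itself. -/
def IsClassRenaming (K : PB) (r : Rel) (ρ : Occurrence → ℕ) : Prop :=
  (∀ o o', IsOcc K o → IsOcc K o' → (ρ o = ρ o' ↔ (o, o') ∈ r)) ∧
    (∀ o p, IsOccVar K o p → (∀ o', IsOccVar K o' p → (o, o') ∈ r) → ρ o = p)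

/-- `σ` encodes a tuple `(q₁,…,q_m) ∈ P(ρ_∼, S)` where `S = (p₁,…,p_m)`
enumerates `var(K) ∩ var(φ)`: it maps each shared variable `p` to a member of
`⌈ρ⌉(p)` and is the identity elsewhere. -/
def IsTupleChoice (K : PB) (φ : Form) (ρ : Occurrence → ℕ) (σ : ℕ → ℕ) : Prop :=
  (∀ p, p ∈ varsPB K → p ∈ vars φ → ∃ o, IsOccVar K o p ∧ σ p = ρ o) ∧
    (∀ p, ¬ (p ∈ varsPB K ∧ p ∈ vars φ) → σ p = p)

/-- Simultaneous substitution of variables by variables. -/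
def substV (σ : ℕ → ℕ) : Form → Form
  | .var p => .var (σ p)
  | .neg φ => .neg (substV σ φ)
  | .conj φ ψ => .conj (substV σ φ) (substV σ ψ)

/-- `ρ_∼(K) ⊢ ψ`. -/
def rhoEntails (K : PB) (ρ : Occurrence → ℕ) (ψ : Form) : Prop :=
  ∀ w : ℕ → Bool, (∀ φ ∈ K, eval w (renameForm ρ φ) = true) → eval w ψ = true

/-- The inference relation `K ⊩₁ φ`. -/
def Inf1 (K : PB) (R : Occurrence → ℕ) (φ : Form) : Prop :=
  ∀ r ρ, IsMCR K R r → IsClassRenaming K r ρ →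
    ∃ σ, IsTupleChoice K φ ρ σ ∧ rhoEntails K ρ (substV σ φ)

/-- The inference relation `K ⊩₂ φ`. -/
def Inf2 (K : PB) (R : Occurrence → ℕ) (φ : Form) : Prop :=
  ∀ r ρ, IsMCR K R r → IsClassRenaming K r ρ →
    ∀ σ, IsTupleChoice K φ ρ σ → rhoEntails K ρ (substV σ φ)

/-- The inference relation `K ⊩₁^B φ`. -/
def Inf1B (K : PB) (R : Occurrence → ℕ) (φ : Form) : Prop :=
  ∀ r ρ, IsBMCR K R r → IsClassRenaming K r ρ →
    ∃ σ, IsTupleChoice K φ ρ σ ∧ rhoEntails K ρ (substV σ φ)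

/-- The inference relation `K ⊩₂^B φ`. -/
def Inf2B (K : PB) (R : Occurrence → ℕ) (φ : Form) : Prop :=
  ∀ r ρ, IsBMCR K R r → IsClassRenaming K r ρ →
    ∀ σ, IsTupleChoice K φ ρ σ → rhoEntails K ρ (substV σ φ)

/-- `μ` is an o-model of `K`: any interpretation `w` with `w (R o) = μ o` for all
occurrences `o` of `K` is a model of `⋀R(K)`. -/
def OModel (K : PB) (R : Occurrence → ℕ) (μ : Occurrence → Bool) : Prop :=
  ∀ w : ℕ → Bool, (∀ o, IsOcc K o → w (R o) = μ o) →
    ∀ φ ∈ K, eval w (renameForm R φ) = true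

/-- `diff_a(μ)`: pairs of occurrences of the same variable on which `μ` differs. -/
def diffA (K : PB) (μ : Occurrence → Bool) : Rel :=
  {q | IsOcc K q.1 ∧ IsOcc K q.2 ∧ sameVar q.1 q.2 ∧ μ q.1 ≠ μ q.2}

/-- `μ` is an a-minimal o-model of `K`. -/
def AMinOModel (K : PB) (R : Occurrence → ℕ) (μ : Occurrence → Bool) : Prop :=
  OModel K R μ ∧ ∀ μ', OModel K R μ' → ¬ diffA K μ' ⊂ diffA K μ

/-- A Boolean interpretation `w` is compatible with an o-interpretation `μ`. -/
def Compatible (K : PB) (μ : Occurrence → Bool) (w : ℕ → Bool) : Prop :=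
  ∀ p ∈ varsPB K, ∃ o, IsOccVar K o p ∧ w p = μ o

/-- The inference relation `K ⊩_{a1} φ`. -/
def InfA1 (K : PB) (R : Occurrence → ℕ) (φ : Form) : Prop :=
  ∀ μ, AMinOModel K R μ → ∃ w, Compatible K μ w ∧ eval w φ = true

/-- The inference relation `K ⊩_{a2} φ`. -/
def InfA2 (K : PB) (R : Occurrence → ℕ) (φ : Form) : Prop :=
  ∀ μ, AMinOModel K R μ → ∀ w, Compatible K μ w → eval w φ = true

/-- LP_m evaluation: an LP_m interpretation assigns a (nonempty) set of truth
values to each variable; it extends to formulas pointwise. -/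
def lpEval (lam : ℕ → Set Bool) : Form → Set Bool
  | .var p => lam p
  | .neg φ => (fun v => !v) '' lpEval lam φ
  | .conj φ ψ => Set.image2 (· && ·) (lpEval lam φ) (lpEval lam ψ)

/-- `lam` is an LP_m interpretation: each variable gets a nonempty set of values. -/
def IsLPInterp (lam : ℕ → Set Bool) : Prop := ∀ p, (lam p).Nonempty

/-- `lam` is an LP_m model of `⋀K`. -/
def LPModelPB (lam : ℕ → Set Bool) (K : PB) : Prop := ∀ φ ∈ K, true ∈ lpEval lam φ

/-- `λ! = {p : λ(p) = {0,1}}`. -/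
def lpBang (lam : ℕ → Set Bool) : Set ℕ := {p | lam p = Set.univ}

/-- `lam` is a minimal LP_m model of `⋀K`. -/
def MinLPModelPB (K : PB) (lam : ℕ → Set Bool) : Prop :=
  IsLPInterp lam ∧ LPModelPB lam K ∧
    ∀ lam', IsLPInterp lam' → LPModelPB lam' K → ¬ lpBang lam' ⊂ lpBang lam

/-- `K ⊢_{LPm} φ`. -/
def LPmEntails (K : PB) (φ : Form) : Prop :=
  ∀ lam, MinLPModelPB K lam → true ∈ lpEval lam φ

/-- Replace the subformula occurrence of `φ` addressed by the path `l` by `ψ`. -/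
def replaceAt : Form → List Step → Form → Form
  | _, [], ψ => ψ
  | .neg φ, .neg :: l, ψ => .neg (replaceAt φ l ψ)
  | .conj φ χ, .left :: l, ψ => .conj (replaceAt φ l ψ) χ
  | .conj φ χ, .right :: l, ψ => .conj φ (replaceAt χ l ψ)
  | φ, _, _ => φ

/-- The equivalence relation `∼_λ` induced on `Occ(K)` by an LP_m interpretation:
its classes are `Occ(p,K)` for `|λ(p)| = 1` and `PosOcc(p,K)`, `NegOcc(p,K)` for
`λ(p) = {0,1}`. -/
def lamRel (K : PB) (lam : ℕ → Set Bool) : Rel :=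
  {q | ∃ p pol pol', IsOccOf K q.1 p pol ∧ IsOccOf K q.2 p pol' ∧
    (lam p = Set.univ → pol = pol')}

open scoped Classical in
/-- The o-interpretation `μ_λ^K` associated with an LP_m interpretation `λ`. -/
noncomputable def muOf (lam : ℕ → Set Bool) (o : Occurrence) : Bool :=
  match occAt o.1 o.2 true with
  | some (p, pol) =>
      if lam p = ({false} : Set Bool) then false
      else if lam p = ({true} : Set Bool) then true
      else pol
  | none => false

end Occ

theorem Bool.exists_eq_singleton_of_ne_univ {S : Set Bool} (hS : S.Nonempty)
    (hne : S ≠ Set.univ) : ∃ b, S = {b} := by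
  obtain ⟨b, hb⟩ := hS
  refine ⟨b, Set.eq_singleton_iff_unique_mem.mpr ⟨hb, fun c hc => ?_⟩⟩
  by_contra hcb
  exact hne (Set.eq_univ_of_forall fun d => by cases b <;> cases c <;> cases d <;> simp_all)

namespace Occ

theorem IsOccOf.isOcc {K : PB} {o : Occurrence} {p : ℕ} {pol : Bool} (h : IsOccOf K o p pol) :
    IsOcc K o :=
  ⟨h.1, p, pol, h.2⟩

theorem IsOccOf.unique {K : PB} {o : Occurrence} {p p' : ℕ} {pol pol' : Bool}
    (h : IsOccOf K o p pol) (h' : IsOccOf K o p' pol') : p = p' ∧ pol = pol' := by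
  simpa using h.2.symm.trans h'.2

theorem IsCRenaming.injOn {K : PB} {R : Occurrence → ℕ} (hR : IsCRenaming K R) :
    Set.InjOn R {o | IsOcc K o} :=
  fun o ho o' ho' h => hR.inj o o' ho ho' h

section LPmAndRenaming

variable {lam : ℕ → Set Bool} {w : ℕ → Bool}

/-- Read at ambient polarity `pol`, the polarity of an occurrence is the value it needs for `φ`
to take the value `pol`. -/
theorem eval_renameBy_eq_of_mem_lpEval {φ : Form} {pol : Bool} {f : List Step → ℕ}
    (hf : ∀ l p pol', occAt φ l pol = some (p, pol') → pol' ∈ lam p → w (f l) = pol')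
    (hφ : pol ∈ lpEval lam φ) : eval w (renameBy f φ) = pol := by
  induction φ generalizing pol f with
  | var q => exact hf [] q pol rfl hφ
  | neg ψ ih =>
    obtain ⟨v, hv, rfl⟩ := hφ
    simp only [renameBy, eval, ih (fun l => hf (.neg :: l)) (by simpa using hv), Bool.not_not]
  | conj ψ χ ih₁ ih₂ =>
    obtain ⟨a, ha, b, hb, hab⟩ := hφ
    have e₁ := fun h => ih₁ (fun l => hf (.left :: l)) h
    have e₂ := fun h => ih₂ (fun l => hf (.right :: l)) h
    cases pol with
    | false =>
      rcases Bool.and_eq_false_iff.mp hab with rfl | rfl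
      · simp only [renameBy, eval, e₁ ha, Bool.false_and]
      · simp only [renameBy, eval, e₂ hb, Bool.and_false]
    | true =>
      obtain ⟨rfl, rfl⟩ := Bool.and_eq_true_iff.mp hab
      simp only [renameBy, eval, e₁ ha, e₂ hb, Bool.and_self]

theorem eval_renameBy_mem_lpEval {φ : Form} {pol : Bool} {f : List Step → ℕ}
    (hf : ∀ l p pol', occAt φ l pol = some (p, pol') → w (f l) ∈ lam p) :
    eval w (renameBy f φ) ∈ lpEval lam φ := by
  induction φ generalizing pol f with
  | var q => exact hf [] q pol rfl
  | neg ψ ih => exact ⟨_, ih (fun l => hf (.neg :: l)), rfl⟩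
  | conj ψ χ ih₁ ih₂ =>
    exact Set.mem_image2_of_mem (ih₁ fun l => hf (.left :: l)) (ih₂ fun l => hf (.right :: l))

end LPmAndRenaming

section LamRel

variable {K : PB} {lam : ℕ → Set Bool}

theorem lamRel_isEquivOn (K : PB) (lam : ℕ → Set Bool) : IsEquivOn K (lamRel K lam) where
  dom := fun _ ⟨_, _, _, h₁, h₂, _⟩ => ⟨h₁.isOcc, h₂.isOcc⟩
  refl := fun _ ⟨hK, p, pol, h⟩ => ⟨p, pol, pol, ⟨hK, h⟩, ⟨hK, h⟩, fun _ => rfl⟩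
  symm := fun _ ⟨p, pol, pol', h₁, h₂, himp⟩ =>
    ⟨p, pol', pol, h₂, h₁, fun hp => (himp hp).symm⟩
  trans := by
    rintro a b c ⟨p, pol, pol', ha, hb, himp⟩ ⟨q, polq, polq', hb', hc, himp'⟩
    obtain ⟨rfl, rfl⟩ := hb.unique hb'
    exact ⟨p, pol, polq', ha, hc, fun hp => (himp hp).trans (himp' hp)⟩

theorem lamRel_compliant (K : PB) (lam : ℕ → Set Bool) : Compliant (lamRel K lam) :=
  fun _ ⟨p, pol, pol', h₁, h₂, _⟩ => ⟨p, pol, pol', h₁.2, h₂.2⟩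

theorem muOf_eq_of_mem {o : Occurrence} {p : ℕ} {pol : Bool}
    (ho : occAt o.1 o.2 true = some (p, pol)) (hpol : pol ∈ lam p) : muOf lam o = pol := by
  simp only [muOf, ho]
  split_ifs with h₀ h₁
  · exact (Set.mem_singleton_iff.mp (h₀ ▸ hpol)).symm
  · exact (Set.mem_singleton_iff.mp (h₁ ▸ hpol)).symm
  · rfl

theorem muOf_eq_of_eq_singleton {o : Occurrence} {p : ℕ} {pol b : Bool}
    (ho : occAt o.1 o.2 true = some (p, pol)) (hb : lam p = {b}) : muOf lam o = b := by
  cases b <;> simp [muOf, ho, hb]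

theorem relConsistent_lamRel {R : Occurrence → ℕ} (hR : Set.InjOn R {o | IsOcc K o})
    (hlam : IsLPInterp lam) (hmodel : LPModelPB lam K) : RelConsistent K R (lamRel K lam) := by
  have : Nonempty Occurrence := ⟨(.var 0, [])⟩
  set w := muOf lam ∘ Function.invFunOn R {o | IsOcc K o}
  have hw : ∀ o, IsOcc K o → w (R o) = muOf lam o :=
    fun o ho => congrArg (muOf lam) (hR.leftInvOn_invFunOn ho)
  refine ⟨w, fun φ hφ => eval_renameBy_eq_of_mem_lpEval ?_ (hmodel φ hφ), ?_⟩
  · intro l p pol hl hpol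
    rw [hw _ ⟨hφ, p, pol, hl⟩, muOf_eq_of_mem hl hpol]
  · rintro ⟨a, b⟩ ⟨p, pol, pol', ha, hb, himp⟩
    rw [hw _ ha.isOcc, hw _ hb.isOcc]
    by_cases hglut : lam p = Set.univ
    · rw [muOf_eq_of_mem ha.2 (hglut ▸ Set.mem_univ pol),
        muOf_eq_of_mem hb.2 (hglut ▸ Set.mem_univ pol'), himp hglut]
    · obtain ⟨v, hv⟩ := Bool.exists_eq_singleton_of_ne_univ (hlam p) hglut
      rw [muOf_eq_of_eq_singleton ha.2 hv, muOf_eq_of_eq_singleton hb.2 hv]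

/-- The extra pair joins a positive and a negative occurrence of a glut. -/
theorem exists_mem_lpBang_of_lamRel_ssubset {r : Rel} (hr : IsEquivOn K r) (hc : Compliant r)
    (hsub : lamRel K lam ⊂ r) :
    ∃ p ∈ lpBang lam, ∀ o o', IsOccVar K o p → IsOccVar K o' p → (o, o') ∈ r := by
  obtain ⟨⟨a, b⟩, hab, habn⟩ := Set.exists_of_ssubset hsub
  obtain ⟨p, pol, pol', hpa, hpb⟩ := hc _ hab
  have ha : IsOccOf K a p pol := ⟨(hr.dom _ hab).1.1, hpa⟩
  have hb : IsOccOf K b p pol' := ⟨(hr.dom _ hab).2.1, hpb⟩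
  obtain ⟨hglut, hpol⟩ : lam p = Set.univ ∧ pol ≠ pol' :=
    Classical.not_imp.mp fun himp => habn ⟨p, pol, pol', ha, hb, himp⟩
  have same_pol : ∀ o o' c, IsOccOf K o p c → IsOccOf K o' p c → (o, o') ∈ r :=
    fun o o' c ho ho' => hsub.1 ⟨p, c, c, ho, ho', fun _ => rfl⟩
  have to_a : ∀ o, IsOccVar K o p → (o, a) ∈ r := by
    rintro o ⟨c, ho⟩
    by_cases hc : c = pol
    · exact same_pol o a c ho (hc ▸ ha)
    · have hc' : c = pol' := by cases c <;> cases pol <;> cases pol' <;> simp_all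
      exact hr.trans _ _ _ (same_pol o b c ho (hc' ▸ hb)) (hr.symm _ hab)
  exact ⟨p, hglut, fun o o' ho ho' => hr.trans _ _ _ (to_a o ho) (hr.symm _ (to_a o' ho'))⟩

end LamRel

section LPOfValuation

variable {K : PB} {R : Occurrence → ℕ} {w : ℕ → Bool}

open scoped Classical in
noncomputable def lpOfValuation (K : PB) (R : Occurrence → ℕ) (w : ℕ → Bool) (x : ℕ) :
    Set Bool :=
  if ∃ o, IsOccVar K o x then {v | ∃ o, IsOccVar K o x ∧ w (R o) = v} else {true}

theorem mem_lpOfValuation {o : Occurrence} {x : ℕ} (ho : IsOccVar K o x) :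
    w (R o) ∈ lpOfValuation K R w x := by
  rw [lpOfValuation, if_pos ⟨o, ho⟩]
  exact ⟨o, ho, rfl⟩

theorem isLPInterp_lpOfValuation : IsLPInterp (lpOfValuation K R w) := by
  intro x
  by_cases hx : ∃ o, IsOccVar K o x
  · obtain ⟨o, ho⟩ := hx
    exact ⟨_, mem_lpOfValuation ho⟩
  · rw [lpOfValuation, if_neg hx]
    exact Set.singleton_nonempty true

theorem lpModelPB_lpOfValuation (hw : ∀ φ ∈ K, eval w (renameForm R φ) = true) :
    LPModelPB (lpOfValuation K R w) K := fun φ hφ =>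
  hw φ hφ ▸ eval_renameBy_mem_lpEval (pol := true) fun _ _ pol hl =>
    mem_lpOfValuation ⟨pol, hφ, hl⟩

theorem notMem_lpBang_lpOfValuation {x : ℕ}
    (hx : ∀ o o', IsOccVar K o x → IsOccVar K o' x → w (R o) = w (R o')) :
    x ∉ lpBang (lpOfValuation K R w) := by
  intro hbang
  have hall : ∀ v, v ∈ lpOfValuation K R w x := fun v => hbang ▸ Set.mem_univ v
  unfold lpOfValuation at hall
  split_ifs at hall
  · obtain ⟨o, ho, hot⟩ := hall true
    obtain ⟨o', ho', hof⟩ := hall false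
    exact Bool.false_ne_true (hof ▸ hot ▸ (hx o o' ho ho').symm)
  · exact Bool.false_ne_true (hall false)

end LPOfValuation

theorem lamRel_not_ssubset_of_minimal {K : PB} {R : Occurrence → ℕ} {lam : ℕ → Set Bool}
    (hmin : ∀ lam', IsLPInterp lam' → LPModelPB lam' K → ¬ lpBang lam' ⊂ lpBang lam)
    {r : Rel} (hr : IsEquivOn K r) (hc : Compliant r) (hcons : RelConsistent K R r) :
    ¬ lamRel K lam ⊂ r := by
  intro hsub
  obtain ⟨w, hwK, hwr⟩ := hcons
  obtain ⟨p, hp, hpr⟩ := exists_mem_lpBang_of_lamRel_ssubset hr hc hsub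
  refine hmin _ isLPInterp_lpOfValuation (lpModelPB_lpOfValuation hwK)
    ⟨fun x hx => ?_, fun h => ?_⟩
  · by_contra hx'
    refine notMem_lpBang_lpOfValuation (fun o o' ⟨c, ho⟩ ⟨c', ho'⟩ => ?_) hx
    exact hwr (o, o') (hsub.1 ⟨x, c, c', ho, ho', fun h => absurd h hx'⟩)
  · exact notMem_lpBang_lpOfValuation (fun o o' ho ho' => hwr _ (hpr o o' ho ho')) (h hp)

end Occ

/-- Proposition 11: if `λ` is a minimal LP_m model of `⋀K`, then
`∼_λ` is an MCR of `K`. -/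
theorem minimal_LPm_model_gives_MCR (K : Occ.PB)
    (R : Occ.Occurrence → ℕ) (hR : Occ.IsCRenaming K R)
    (lam : ℕ → Set Bool) (h : Occ.MinLPModelPB K lam) :
    Occ.IsMCR K R (Occ.lamRel K lam) := by
  obtain ⟨hlam, hmodel, hmin⟩ := h
  exact ⟨Occ.lamRel_isEquivOn K lam, Occ.lamRel_compliant K lam,
    Occ.relConsistent_lamRel hR.injOn hlam hmodel,
    fun _ hr hc hcons => Occ.lamRel_not_ssubset_of_minimal hmin hr hc hcons⟩
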